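/- arXiv:1702.05224 — 3 statements merged into one kernel-verified Lean document; each statement's English description precedes it below -/
import Mathlib

section
/- If P is a permutation matrix, then the penalty function G(P) = (1/3)·tr(Pᵀ(P − P∘P)) equals 0; more generally, for orthogonal P, G(P) ≥ 0 with equality if and only if P is a permutation matrix. -/
/-!
`tr(Pᵀ(P − P∘P)) = ∑ p_{ij}² (1 − p_{ij})`. The columns of an orthogonal `P` are unit vectors,
so `p_{ij} ≤ 1` and every summand is nonnegative; the sum vanishes iff every entry is `0` or `1`.
A `0/1` matrix whose rows and columns are unit vectors has exactly one `1` in each row and in each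
column, i.e. it is a permutation matrix.
-/

open Matrix
open scoped Matrix

/-- A permutation matrix: `P i j = 1` iff `j = σ i`. -/
def IsPermMatrix {n : ℕ} (P : Matrix (Fin n) (Fin n) ℝ) : Prop :=
  ∃ σ : Equiv.Perm (Fin n), ∀ i j, P i j = if σ i = j then 1 else 0

theorem sq_mul_one_sub_eq_zero_iff {R : Type*} [CommRing R] [IsDomain R] {x : R} :
    x ^ 2 * (1 - x) = 0 ↔ x = 0 ∨ x = 1 := by
  rw [mul_eq_zero, sq_eq_zero_iff, sub_eq_zero, eq_comm (a := (1 : R))]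

theorem existsUnique_eq_one_of_sum_sq_eq_one {ι R : Type*} [Fintype ι] [Semiring R] [CharZero R]
    {v : ι → R} (hv : ∀ k, v k = 0 ∨ v k = 1) (hsum : ∑ k, v k ^ 2 = 1) : ∃! k, v k = 1 := by
  classical
  have hsq k : v k ^ 2 = if v k = 1 then 1 else 0 := by
    rcases hv k with h | h <;> simp [h]
  simpa only [hsq, Finset.sum_boole, Nat.cast_eq_one, Finset.card_eq_one_iff_existsUnique,
    Finset.mem_filter, Finset.mem_univ, true_and] using hsum

namespace Matrix

variable {m n R : Type*}

theorem trace_transpose_mul_sub_hadamard_self [Fintype m] [Fintype n] [CommRing R]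
    (A : Matrix m n R) : trace (Aᵀ * (A - A ⊙ A)) = ∑ i, ∑ j, A i j ^ 2 * (1 - A i j) := by
  rw [Finset.sum_comm]
  simp only [trace, diag, mul_apply, sub_apply, hadamard_apply, transpose_apply]
  congr! 2
  ring

theorem sum_sq_apply_eq_one_of_transpose_mul_self_eq_one [Fintype m] [DecidableEq n] [CommRing R]
    {A : Matrix m n R} (hA : Aᵀ * A = 1) (j : n) : ∑ i, A i j ^ 2 = 1 := by
  simpa [mul_apply, sq] using congr_fun₂ hA j j

theorem apply_le_one_of_transpose_mul_self_eq_one [Fintype m] [DecidableEq n] [CommRing R]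
    [LinearOrder R] [IsStrictOrderedRing R] {A : Matrix m n R} (hA : Aᵀ * A = 1) (i : m) (j : n) :
    A i j ≤ 1 := by
  have hsq : A i j ^ 2 ≤ 1 := by
    rw [← sum_sq_apply_eq_one_of_transpose_mul_self_eq_one hA j]
    exact Finset.single_le_sum (fun k _ => sq_nonneg (A k j)) (Finset.mem_univ i)
  exact (le_abs_self _).trans (sq_le_one_iff_abs_le_one _ |>.mp hsq)

theorem sum_sq_mul_one_sub_nonneg [Fintype m] [Fintype n] [CommRing R] [LinearOrder R]
    [IsStrictOrderedRing R] {A : Matrix m n R} (hA : ∀ i j, A i j ≤ 1) :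
    0 ≤ ∑ i, ∑ j, A i j ^ 2 * (1 - A i j) :=
  Finset.sum_nonneg fun i _ => Finset.sum_nonneg fun j _ =>
    mul_nonneg (sq_nonneg _) (sub_nonneg.mpr (hA i j))

theorem sum_sq_mul_one_sub_eq_zero_iff [Fintype m] [Fintype n] [CommRing R] [LinearOrder R]
    [IsStrictOrderedRing R] {A : Matrix m n R} (hA : ∀ i j, A i j ≤ 1) :
    ∑ i, ∑ j, A i j ^ 2 * (1 - A i j) = 0 ↔ ∀ i j, A i j = 0 ∨ A i j = 1 := by
  have hterm i j : 0 ≤ A i j ^ 2 * (1 - A i j) :=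
    mul_nonneg (sq_nonneg _) (sub_nonneg.mpr (hA i j))
  simp only [Fintype.sum_eq_zero_iff_of_nonneg fun i => Finset.sum_nonneg fun j _ => hterm i j,
    funext_iff, Pi.zero_apply, Fintype.sum_eq_zero_iff_of_nonneg (hterm _),
    sq_mul_one_sub_eq_zero_iff]

theorem exists_perm_eq_ite_of_transpose_mul_self_eq_one [Fintype n] [DecidableEq n] [CommRing R]
    [CharZero R] {P : Matrix n n R} (hP : Pᵀ * P = 1) (h01 : ∀ i j, P i j = 0 ∨ P i j = 1) :
    ∃ σ : Equiv.Perm n, ∀ i j, P i j = if σ i = j then 1 else 0 := by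
  have hcol j : ∃! i, P i j = 1 :=
    existsUnique_eq_one_of_sum_sq_eq_one (h01 · j)
      (sum_sq_apply_eq_one_of_transpose_mul_self_eq_one hP j)
  have hrow i : ∃! j, P i j = 1 :=
    existsUnique_eq_one_of_sum_sq_eq_one (h01 i)
      (sum_sq_apply_eq_one_of_transpose_mul_self_eq_one (A := Pᵀ) (mul_eq_one_comm.mp hP) i)
  choose σ hσ hσ_unique using hrow
  have hbij : Function.Bijective σ := by
    refine ⟨fun i i' h => (hcol (σ i)).unique (hσ i) (h ▸ hσ i'), fun j => ?_⟩
    obtain ⟨i, hi, -⟩ := hcol j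
    exact ⟨i, (hσ_unique i j hi).symm⟩
  refine ⟨Equiv.ofBijective σ hbij, fun i j => ?_⟩
  rw [Equiv.ofBijective_apply]
  split_ifs with h
  · exact h ▸ hσ i
  · exact (h01 i j).resolve_right fun h1 => h (hσ_unique i j h1).symm

end Matrix

/-- For orthogonal `P`, the penalty `G(P) = (1/3) tr(Pᵀ(P − P∘P))` is nonnegative,
and it vanishes iff `P` is a permutation matrix. -/
theorem penalty_nonneg_eq_zero_iff_perm {n : ℕ} (P : Matrix (Fin n) (Fin n) ℝ)
    (hP : Pᵀ * P = 1) :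
    0 ≤ (1 / 3 : ℝ) * Matrix.trace (Pᵀ * (P - P ⊙ P)) ∧
      ((1 / 3 : ℝ) * Matrix.trace (Pᵀ * (P - P ⊙ P)) = 0 ↔ IsPermMatrix P) := by
  have hle := apply_le_one_of_transpose_mul_self_eq_one hP
  rw [trace_transpose_mul_sub_hadamard_self]
  refine ⟨mul_nonneg (by norm_num) (sum_sq_mul_one_sub_nonneg hle), ?_⟩
  rw [mul_eq_zero, or_iff_right (by norm_num), sum_sq_mul_one_sub_eq_zero_iff hle]
  refine ⟨exists_perm_eq_ite_of_transpose_mul_self_eq_one hP, ?_⟩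
  rintro ⟨σ, hσ⟩ i j
  rw [hσ]
  split_ifs <;> simp
end

section
/- (Procrustes minimizer form) Let A = V_A Λ_A V_Aᵀ and B = V_B Λ_B V_Bᵀ be symmetric matrices with eigenvalues sorted in the same (decreasing) order in Λ_A and Λ_B, V_A, V_B orthogonal. Then P* = V_B S V_Aᵀ with S = diag(±1,…,±1) is orthogonal and achieves ‖A − P*ᵀ B P*‖_F = ‖Λ_A − Λ_B‖_F, which is at most ‖A − QᵀBQ‖_F for every orthogonal Q. -/
open Matrix

/-- Frobenius norm. -/
noncomputable def frob {n : ℕ} (M : Matrix (Fin n) (Fin n) ℝ) : ℝ :=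
  Real.sqrt (Matrix.trace (Mᵀ * M))

/-!
Conjugating by `V_A` turns `A - Qᵀ B Q` into `diag a - W diag b Wᵀ` with `W = V_Aᵀ Qᵀ V_B`
orthogonal; for `Q = P*` this `W` is the sign matrix `S`, which commutes with `diag b`.
Expanding the squared Frobenius norm, minimality amounts to
`tr (diag a · W diag b Wᵀ) = ∑ i j, W i j ^ 2 * a i * b j ≤ ∑ i, a i * b i`.
The matrix `(W i j ^ 2)` is doubly stochastic, so by Birkhoff's theorem it is a convex
combination of permutation matrices, and for each permutation the rearrangement inequality
applies because `a` and `b` are sorted the same way.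
-/

section DoublyStochastic

variable {R ι : Type*} [Field R] [LinearOrder R] [IsStrictOrderedRing R] [Fintype ι]
  [DecidableEq ι]

theorem Monovary.sum_mul_mul_le_of_mem_doublyStochastic {a b : ι → R} (hab : Monovary a b)
    {d : Matrix ι ι R} (hd : d ∈ doublyStochastic R ι) :
    ∑ i, ∑ j, d i j * (a i * b j) ≤ ∑ i, a i * b i := by
  obtain ⟨w, hw0, hw1, rfl⟩ := exists_eq_sum_perm_of_mem_doublyStochastic hd
  have hperm (σ : Equiv.Perm ι) (i : ι) :
      ∑ j, σ.permMatrix R i j * (a i * b j) = a i * b (σ i) := by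
    simp [Equiv.Perm.permMatrix, PEquiv.toMatrix_apply, Equiv.toPEquiv_apply]
  calc ∑ i, ∑ j, (∑ σ, w σ • σ.permMatrix R) i j * (a i * b j)
      = ∑ σ, w σ * ∑ i, a i * b (σ i) := by
        simp_rw [← hperm, Finset.mul_sum, Matrix.sum_apply, Matrix.smul_apply, smul_eq_mul,
          Finset.sum_mul, mul_assoc]
        exact (Finset.sum_congr rfl fun _ _ => Finset.sum_comm).trans Finset.sum_comm
    _ ≤ ∑ σ, w σ * ∑ i, a i * b i :=
        Finset.sum_le_sum fun σ _ =>
          mul_le_mul_of_nonneg_left hab.sum_mul_comp_perm_le_sum_mul (hw0 σ)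
    _ = ∑ i, a i * b i := by rw [← Finset.sum_mul, hw1, one_mul]

theorem of_sq_mem_doublyStochastic_of_transpose_mul_self_eq_one {W : Matrix ι ι R}
    (hW : Wᵀ * W = 1) : Matrix.of (fun i j => W i j ^ 2) ∈ doublyStochastic R ι := by
  have hW' : W * Wᵀ = 1 := mul_eq_one_comm.mp hW
  refine mem_doublyStochastic_iff_sum.mpr ⟨fun i j => sq_nonneg _, fun i => ?_, fun j => ?_⟩
  · simpa [Matrix.mul_apply, sq] using congrFun (congrFun hW' i) i
  · simpa [Matrix.mul_apply, sq] using congrFun (congrFun hW j) j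

theorem trace_diagonal_mul_conj_le {a b : ι → R} (hab : Monovary a b) {W : Matrix ι ι R}
    (hW : Wᵀ * W = 1) :
    trace (diagonal a * (W * diagonal b * Wᵀ)) ≤ ∑ i, a i * b i := by
  convert hab.sum_mul_mul_le_of_mem_doublyStochastic
    (of_sq_mem_doublyStochastic_of_transpose_mul_self_eq_one hW) using 1
  simp only [trace, diag, Matrix.mul_apply, diagonal_apply, transpose_apply, of_apply, ite_mul,
    mul_ite, zero_mul, mul_zero, Finset.sum_ite_eq, Finset.sum_ite_eq', Finset.mem_univ, if_true]
  refine Finset.sum_congr rfl fun i _ => ?_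
  rw [Finset.mul_sum]
  exact Finset.sum_congr rfl fun j _ => by ring

theorem trace_transpose_mul_self_diagonal_sub_le {a b : ι → R} (hab : Monovary a b)
    {W : Matrix ι ι R} (hW : Wᵀ * W = 1) :
    trace ((diagonal a - diagonal b)ᵀ * (diagonal a - diagonal b)) ≤
      trace ((diagonal a - W * diagonal b * Wᵀ)ᵀ * (diagonal a - W * diagonal b * Wᵀ)) := by
  set X := W * diagonal b * Wᵀ
  have hXsymm : Xᵀ = X := by simp [X, transpose_mul, Matrix.mul_assoc]
  have hXX : trace (X * X) = ∑ i, b i * b i := by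
    have hWWt : Wᵀ * (W * (diagonal b * Wᵀ)) = diagonal b * Wᵀ := by
      rw [← Matrix.mul_assoc, hW, Matrix.one_mul]
    simp only [X, Matrix.mul_assoc, hWWt]
    rw [trace_mul_comm]
    simp only [Matrix.mul_assoc, hW, Matrix.mul_one]
    rw [diagonal_mul_diagonal, trace_diagonal]
  have hexpand : trace ((diagonal a - X)ᵀ * (diagonal a - X)) =
      ∑ i, a i * a i + trace (X * X) - 2 * trace (diagonal a * X) := by
    rw [transpose_sub, hXsymm, diagonal_transpose, Matrix.sub_mul, Matrix.mul_sub,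
      Matrix.mul_sub, trace_sub, trace_sub, trace_sub, trace_mul_comm X (diagonal a),
      diagonal_mul_diagonal, trace_diagonal]
    ring
  have hdiag : trace ((diagonal a - diagonal b)ᵀ * (diagonal a - diagonal b)) =
      ∑ i, a i * a i + ∑ i, b i * b i - 2 * ∑ i, a i * b i := by
    rw [diagonal_sub, diagonal_transpose, diagonal_mul_diagonal, trace_diagonal, Finset.mul_sum,
      ← Finset.sum_add_distrib, ← Finset.sum_sub_distrib]
    exact Finset.sum_congr rfl fun i _ => by ring
  rw [hdiag, hexpand, hXX]
  linarith [trace_diagonal_mul_conj_le hab hW]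

end DoublyStochastic

theorem Matrix.mem_unitaryGroup_iff_transpose_mul_self {ι R : Type*} [Fintype ι]
    [DecidableEq ι] [CommRing R] [StarRing R] [TrivialStar R] {A : Matrix ι ι R} :
    A ∈ unitaryGroup ι R ↔ Aᵀ * A = 1 := by
  rw [mem_unitaryGroup_iff', star_eq_conjTranspose, conjTranspose_eq_transpose_of_trivial]

theorem conj_sub_transpose_mul_conj_mul {ι R : Type*} [Fintype ι] [DecidableEq ι] [CommRing R]
    {VA : Matrix ι ι R} (hVA : VA * VAᵀ = 1) (X Y VB Q : Matrix ι ι R) :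
    VA * X * VAᵀ - Qᵀ * (VB * Y * VBᵀ) * Q =
      VA * (X - (VAᵀ * Qᵀ * VB) * Y * (VAᵀ * Qᵀ * VB)ᵀ) * VAᵀ := by
  have hcancel (M : Matrix ι ι R) : VA * (VAᵀ * M) = M := by
    rw [← Matrix.mul_assoc, hVA, Matrix.one_mul]
  simp only [Matrix.mul_sub, Matrix.sub_mul, transpose_mul, transpose_transpose,
    Matrix.mul_assoc, hcancel, hVA, Matrix.mul_one]

theorem frob_mul_mul_transpose {n : ℕ} {V : Matrix (Fin n) (Fin n) ℝ} (hV : Vᵀ * V = 1)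
    (C : Matrix (Fin n) (Fin n) ℝ) : frob (V * C * Vᵀ) = frob C := by
  have hcancel (M : Matrix (Fin n) (Fin n) ℝ) : Vᵀ * (V * M) = M := by
    rw [← Matrix.mul_assoc, hV, Matrix.one_mul]
  unfold frob
  rw [transpose_mul, transpose_mul, transpose_transpose]
  simp only [Matrix.mul_assoc, hcancel]
  rw [trace_mul_comm, Matrix.mul_assoc, Matrix.mul_assoc, hV, Matrix.mul_one]

theorem procrustes_minimizer_general {n : ℕ} (A B VA VB : Matrix (Fin n) (Fin n) ℝ)
    (a b : Fin n → ℝ) (ha : Antitone a) (hb : Antitone b)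
    (hVA : VAᵀ * VA = 1)
    (hVB : VBᵀ * VB = 1)
    (hAdec : A = VA * Matrix.diagonal a * VAᵀ)
    (hBdec : B = VB * Matrix.diagonal b * VBᵀ)
    (s : Fin n → ℝ) (hs : ∀ i, s i = 1 ∨ s i = -1) :
    let Pstar := VB * Matrix.diagonal s * VAᵀ
    Pstarᵀ * Pstar = 1 ∧
    frob (A - Pstarᵀ * B * Pstar) = frob (Matrix.diagonal a - Matrix.diagonal b) ∧
    ∀ Q : Matrix (Fin n) (Fin n) ℝ, Qᵀ * Q = 1 →
      frob (A - Pstarᵀ * B * Pstar) ≤ frob (A - Qᵀ * B * Q) := by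
  intro P
  have hVA' : VA * VAᵀ = 1 := mul_eq_one_comm.mp hVA
  have hO {M : Matrix (Fin n) (Fin n) ℝ} := mem_unitaryGroup_iff_transpose_mul_self (A := M)
  have hOt {M : Matrix (Fin n) (Fin n) ℝ} (hM : Mᵀ * M = 1) : Mᵀ ∈ unitaryGroup (Fin n) ℝ :=
    transpose_mem_unitaryGroup_iff.mpr (hO.mpr hM)
  have hss : diagonal s * diagonal s = 1 := by
    rw [diagonal_mul_diagonal, ← diagonal_one]
    exact congrArg diagonal (funext fun i => by rcases hs i with h | h <;> simp [h])
  have hS : diagonal s ∈ unitaryGroup (Fin n) ℝ := hO.mpr (by rwa [diagonal_transpose])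
  have hPW : VAᵀ * Pᵀ * VB = diagonal s := by
    simp only [P, transpose_mul, transpose_transpose, diagonal_transpose, Matrix.mul_assoc,
      hVB, Matrix.mul_one]
    rw [← Matrix.mul_assoc, hVA, Matrix.one_mul]
  have hsbs : diagonal s * diagonal b * (diagonal s)ᵀ = diagonal b := by
    rw [diagonal_transpose, (commute_diagonal s b).eq, Matrix.mul_assoc, hss, Matrix.mul_one]
  have hPmin : frob (A - Pᵀ * B * P) = frob (diagonal a - diagonal b) := by
    rw [hAdec, hBdec, conj_sub_transpose_mul_conj_mul hVA', frob_mul_mul_transpose hVA, hPW,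
      hsbs]
  refine ⟨hO.mp (mul_mem (mul_mem (hO.mpr hVB) hS) (hOt hVA)), hPmin, fun Q hQ => ?_⟩
  rw [hPmin, hAdec, hBdec, conj_sub_transpose_mul_conj_mul hVA', frob_mul_mul_transpose hVA]
  exact Real.sqrt_le_sqrt (trace_transpose_mul_self_diagonal_sub_le (ha.monovary hb)
    (hO.mp (mul_mem (mul_mem (hOt hVA) (hOt hQ)) (hO.mpr hVB))))

/-- Procrustes minimizer form: if `A = V_A Λ_A V_Aᵀ`, `B = V_B Λ_B V_Bᵀ` with
`V_A`, `V_B` orthogonal and eigenvalues sorted decreasingly, then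
`P* = V_B S V_Aᵀ` (with `S` a diagonal sign matrix) is orthogonal, achieves
`‖A − P*ᵀ B P*‖_F = ‖Λ_A − Λ_B‖_F`, and this is minimal over all orthogonal `Q`. -/
theorem procrustes_minimizer {n : ℕ} (A B VA VB : Matrix (Fin n) (Fin n) ℝ)
    (a b : Fin n → ℝ) (ha : Antitone a) (hb : Antitone b)
    (hVA : VAᵀ * VA = 1) (hVA' : VA * VAᵀ = 1)
    (hVB : VBᵀ * VB = 1) (hVB' : VB * VBᵀ = 1)
    (hAsymm : Aᵀ = A) (hBsymm : Bᵀ = B)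
    (hAdec : A = VA * Matrix.diagonal a * VAᵀ)
    (hBdec : B = VB * Matrix.diagonal b * VBᵀ)
    (s : Fin n → ℝ) (hs : ∀ i, s i = 1 ∨ s i = -1) :
    let Pstar := VB * Matrix.diagonal s * VAᵀ
    Pstarᵀ * Pstar = 1 ∧
    frob (A - Pstarᵀ * B * Pstar) = frob (Matrix.diagonal a - Matrix.diagonal b) ∧
    ∀ Q : Matrix (Fin n) (Fin n) ℝ, Qᵀ * Q = 1 →
      frob (A - Pstarᵀ * B * Pstar) ≤ frob (A - Qᵀ * B * Q) :=
  procrustes_minimizer_general A B VA VB a b ha hb hVA hVB hAdec hBdec s hs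
end

section
/- For sequences a_1 ≥ … ≥ a_n and b_1 ≤ … ≤ b_n (opposite orderings) and any orthogonal Q, tr(Λ_A Qᵀ Λ_B Q) ≥ Σ_{i=1}^n a_i b_i, with equality at Q = I; i.e., sorting eigenvalues in opposite order minimizes the trace over the orthogonal group. -/
/-!
Writing `D i j = Q j i ^ 2`, the trace equals `a ⬝ᵥ (D *ᵥ b)`. Orthogonality of `Q` makes `D`
doubly stochastic, so by Birkhoff's theorem `D` lies in the convex hull of the permutation
matrices. The half-space `{D | a ⬝ᵥ b ≤ a ⬝ᵥ (D *ᵥ b)}` is convex, `D ↦ a ⬝ᵥ (D *ᵥ b)` being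
linear, and it contains every permutation matrix by the rearrangement inequality for the
oppositely ordered `a` and `b`.
-/

open Matrix

variable {R n : Type*} [Fintype n] [DecidableEq n]

theorem Matrix.trace_diagonal_mul_transpose_mul_diagonal_mul [CommSemiring R]
    (a b : n → R) (Q : Matrix n n R) :
    trace (diagonal a * Qᵀ * diagonal b * Q) = a ⬝ᵥ ((Qᵀ ⊙ Qᵀ) *ᵥ b) := by
  simp only [trace, diag, dotProduct, mulVec, mul_apply, diagonal_apply, transpose_apply,
    hadamard_apply, ite_mul, zero_mul, Finset.sum_ite_eq, Finset.mem_univ, if_true,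
    mul_ite, mul_zero, Finset.sum_ite_eq', Finset.mul_sum]
  refine Finset.sum_congr rfl fun i _ => Finset.sum_congr rfl fun j _ => ?_
  ring

theorem Matrix.hadamard_self_mem_doublyStochastic [CommRing R] [LinearOrder R]
    [IsStrictOrderedRing R] {Q : Matrix n n R} (hQ : Q * Qᵀ = 1) : Q ⊙ Q ∈ doublyStochastic R n := by
  have hQ' : Qᵀ * Q = 1 := mul_eq_one_comm.mp hQ
  refine mem_doublyStochastic_iff_sum.mpr
    ⟨fun i j => mul_self_nonneg (Q i j), fun i => ?_, fun j => ?_⟩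
  · simpa [mul_apply, one_apply] using congrFun (congrFun hQ i) i
  · simpa [mul_apply, one_apply] using congrFun (congrFun hQ' j) j

theorem Antivary.dotProduct_le_dotProduct_mulVec [Field R] [LinearOrder R] [IsStrictOrderedRing R]
    {a b : n → R} (hab : Antivary a b) {D : Matrix n n R} (hD : D ∈ doublyStochastic R n) :
    a ⬝ᵥ b ≤ a ⬝ᵥ (D *ᵥ b) := by
  have hlin : IsLinearMap R fun M : Matrix n n R => a ⬝ᵥ (M *ᵥ b) :=
    ⟨fun M N => by simp only [add_mulVec, dotProduct_add],
      fun c M => by simp only [smul_mulVec, dotProduct_smul]⟩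
  have hperm : {σ.permMatrix R | σ : Equiv.Perm n} ⊆ {M | a ⬝ᵥ b ≤ a ⬝ᵥ (M *ᵥ b)} := by
    rintro _ ⟨σ, rfl⟩
    simpa [permMatrix_mulVec, dotProduct] using hab.sum_smul_le_sum_smul_comp_perm (σ := σ)
  rw [← SetLike.mem_coe, doublyStochastic_eq_convexHull_permMatrix] at hD
  exact convexHull_min hperm (convex_halfSpace_ge hlin _) hD

/-- For oppositely sorted sequences (`a` decreasing, `b` increasing) and any
orthogonal `Q`, `tr(Λ_A Qᵀ Λ_B Q) ≥ Σ aᵢ bᵢ`, with equality at `Q = 1`. -/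
theorem procrustes_opposite_order {n : ℕ} (a b : Fin n → ℝ)
    (ha : Antitone a) (hb : Monotone b) :
    (∀ Q : Matrix (Fin n) (Fin n) ℝ, Qᵀ * Q = 1 →
      ∑ i : Fin n, a i * b i ≤
        Matrix.trace (Matrix.diagonal a * Qᵀ * Matrix.diagonal b * Q)) ∧
    Matrix.trace (Matrix.diagonal a * (1 : Matrix (Fin n) (Fin n) ℝ)ᵀ *
        Matrix.diagonal b * 1) = ∑ i : Fin n, a i * b i := by
  refine ⟨fun Q hQ => ?_, by simp [diagonal_mul_diagonal, trace_diagonal]⟩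
  rw [trace_diagonal_mul_transpose_mul_diagonal_mul]
  exact (ha.antivary hb).dotProduct_le_dotProduct_mulVec
    (hadamard_self_mem_doublyStochastic (by rwa [transpose_transpose]))
end
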